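/- Let (Ω, 𝓕, P) be a probability space, m ⊆ 𝓕 a sub-σ-algebra, and Y₁, Y₂ square-integrable real random variables. Let Z : Ω → ℝᵏ be an m-measurable random vector with square-integrable coordinates, mean vector μ_N = E[Z], and covariance matrix Σ_f with entries (Σ_f)_{ij} = E[Z_i Z_j] − E[Z_i]E[Z_j]. Let Σ_N be an invertible k×k real matrix, let Σ₁, Σ₂ ∈ ℝᵏ be (row) vectors and μ₁, μ₂ ∈ ℝ, and assume the conditional means satisfy E[Y_i | m] = μ_i + Σ_i Σ_N⁻¹ (Z − μ_N) almost surely, for i = 1, 2, with E[Y_i | m] E[Y_j | m] and E[Y₁ Y₂ | m] integrable. Then Cov(Y₁, Y₂) = E[E[Y₁Y₂ | m] − E[Y₁ | m] E[Y₂ | m]] + Σ₁ Σ_N⁻¹ Σ_f (Σ₂ Σ_N⁻¹)ᵀ, where Cov(Y₁, Y₂) = E[Y₁Y₂] − E[Y₁]E[Y₂]. -/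

import Mathlib

open MeasureTheory ProbabilityTheory Matrix

/-!
By the law of total covariance, `Cov(Y₁, Y₂) = E[Cov(Y₁, Y₂ | m)] + Cov(E[Y₁ | m], E[Y₂ | m])`.
The Gaussian conditioning formula makes each `E[Yᵢ | m]` an affine function `cᵢ + aᵢ ⬝ᵥ Z` with
`aᵢ = Σᵢ Σ_N⁻¹`, so the second term is the bilinear form `a₁ Σ_f a₂ᵀ` of the covariance matrix
of `Z`.
-/

section Covariance

variable {Ω ι : Type*} {mΩ : MeasurableSpace Ω} {μ : Measure Ω}

lemma covariance_congr_ae {X X' Y Y' : Ω → ℝ} (hX : X =ᵐ[μ] X') (hY : Y =ᵐ[μ] Y') :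
    cov[X, Y; μ] = cov[X', Y'; μ] := by
  unfold covariance
  rw [integral_congr_ae hX, integral_congr_ae hY]
  refine integral_congr_ae ?_
  filter_upwards [hX, hY] with ω hXω hYω
  rw [hXω, hYω]

/-- Law of total covariance. -/
lemma integral_condExp_mul_sub_add_covariance_condExp [IsProbabilityMeasure μ]
    {m : MeasurableSpace Ω} (hm : m ≤ mΩ) {X Y : Ω → ℝ} (hX : MemLp X 2 μ) (hY : MemLp Y 2 μ) :
    ∫ ω, ((μ[fun ω => X ω * Y ω|m]) ω - (μ[X|m]) ω * (μ[Y|m]) ω) ∂μ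
      + cov[μ[X|m], μ[Y|m]; μ] = cov[X, Y; μ] := by
  have hXm : MemLp (μ[X|m]) 2 μ := hX.condExp one_le_two
  have hYm : MemLp (μ[Y|m]) 2 μ := hY.condExp one_le_two
  have hXYm : Integrable (fun ω => (μ[X|m]) ω * (μ[Y|m]) ω) μ := hXm.integrable_mul hYm
  rw [covariance_eq_sub hXm hYm, covariance_eq_sub hX hY]
  simp only [Pi.mul_apply]
  rw [integral_sub integrable_condExp hXYm, integral_condExp hm, integral_condExp hm,
    integral_condExp hm]
  ring

noncomputable def covarianceMatrix (X : Ω → ι → ℝ) (μ : Measure Ω) : Matrix ι ι ℝ :=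
  Matrix.of fun i j => cov[fun ω => X ω i, fun ω => X ω j; μ]

variable [Fintype ι] {X : Ω → ι → ℝ}

lemma covariance_dotProduct_dotProduct [IsFiniteMeasure μ]
    (hX : ∀ i, MemLp (fun ω => X ω i) 2 μ) (a b : ι → ℝ) :
    cov[fun ω => a ⬝ᵥ X ω, fun ω => b ⬝ᵥ X ω; μ] = a ⬝ᵥ (covarianceMatrix X μ *ᵥ b) := by
  simp only [dotProduct]
  rw [covariance_fun_sum_fun_sum (fun i => (hX i).const_mul _) (fun j => (hX j).const_mul _)]
  simp only [covariance_const_mul_left, covariance_const_mul_right, mulVec, dotProduct,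
    covarianceMatrix, of_apply, Finset.mul_sum]
  exact Finset.sum_congr rfl fun i _ => Finset.sum_congr rfl fun j _ => by ring

lemma covariance_const_add_dotProduct [IsProbabilityMeasure μ]
    (hX : ∀ i, MemLp (fun ω => X ω i) 2 μ) (c d : ℝ) (a b : ι → ℝ) :
    cov[fun ω => c + a ⬝ᵥ X ω, fun ω => d + b ⬝ᵥ X ω; μ]
      = a ⬝ᵥ (covarianceMatrix X μ *ᵥ b) := by
  have hint : ∀ v : ι → ℝ, Integrable (fun ω => v ⬝ᵥ X ω) μ := fun v =>
    integrable_finsetSum _ fun i _ => ((hX i).integrable one_le_two).const_mul (v i)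
  rw [covariance_const_add_left (hint a), covariance_const_add_right (hint b),
    covariance_dotProduct_dotProduct hX]

end Covariance

theorem pogamp_covariance_decomposition_general {Ω : Type*} {F : MeasurableSpace Ω}
    {P : Measure Ω} [IsProbabilityMeasure P]
    {m : MeasurableSpace Ω} (hm : m ≤ F) {k : ℕ}
    (Y₁ Y₂ : Ω → ℝ) (hY₁ : MemLp Y₁ 2 P) (hY₂ : MemLp Y₂ 2 P)
    (Z : Ω → Fin k → ℝ)
    (hZ2 : ∀ i, MemLp (fun ω => Z ω i) 2 P)
    (μN : Fin k → ℝ)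
    (Sf : Matrix (Fin k) (Fin k) ℝ)
    (hSf : ∀ i j, Sf i j =
      ∫ ω, Z ω i * Z ω j ∂P - (∫ ω, Z ω i ∂P) * ∫ ω, Z ω j ∂P)
    (SN : Matrix (Fin k) (Fin k) ℝ)
    (S₁ S₂ : Fin k → ℝ) (μ₁ μ₂ : ℝ)
    (hc₁ : P[Y₁|m] =ᵐ[P] fun ω => μ₁ + S₁ ⬝ᵥ (SN⁻¹ *ᵥ fun j => Z ω j - μN j))
    (hc₂ : P[Y₂|m] =ᵐ[P] fun ω => μ₂ + S₂ ⬝ᵥ (SN⁻¹ *ᵥ fun j => Z ω j - μN j)) :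
    ∫ ω, Y₁ ω * Y₂ ω ∂P - (∫ ω, Y₁ ω ∂P) * ∫ ω, Y₂ ω ∂P =
      (∫ ω, ((P[fun ω => Y₁ ω * Y₂ ω|m]) ω - (P[Y₁|m]) ω * (P[Y₂|m]) ω) ∂P)
        + (S₁ ᵥ* SN⁻¹) ⬝ᵥ (Sf *ᵥ (S₂ ᵥ* SN⁻¹)) := by
  have hSf_eq : Sf = covarianceMatrix Z P := Matrix.ext fun i j => by
    rw [hSf, covarianceMatrix, of_apply, covariance_eq_sub (hZ2 i) (hZ2 j)]
    rfl
  have h_affine : ∀ (S : Fin k → ℝ) (c : ℝ),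
      (fun ω => c + S ⬝ᵥ (SN⁻¹ *ᵥ fun j => Z ω j - μN j))
        = fun ω => (c - (S ᵥ* SN⁻¹) ⬝ᵥ μN) + (S ᵥ* SN⁻¹) ⬝ᵥ Z ω := by
    intro S c
    funext ω
    rw [dotProduct_mulVec, show (fun j => Z ω j - μN j) = Z ω - μN from rfl, dotProduct_sub]
    ring
  refine (covariance_eq_sub hY₁ hY₂).symm.trans ?_
  rw [← integral_condExp_mul_sub_add_covariance_condExp hm hY₁ hY₂, covariance_congr_ae hc₁ hc₂,
    h_affine, h_affine, covariance_const_add_dotProduct hZ2, hSf_eq]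

/-- First identity of Proposition 4 (covariance function of the POGAMP, conditionally
on the point pattern): the law-of-total-covariance decomposition
`Cov(Y₁,Y₂) = E[Cov(Y₁,Y₂|m)] + Σ₁ Σ_N⁻¹ Σ_f (Σ₂ Σ_N⁻¹)ᵀ`,
given the Gaussian conditional-mean formulas `E[Yᵢ|m] = μᵢ + Σᵢ Σ_N⁻¹ (Z − μ_N)`. -/
theorem pogamp_covariance_decomposition {Ω : Type*} {F : MeasurableSpace Ω}
    {P : Measure Ω} [IsProbabilityMeasure P]
    {m : MeasurableSpace Ω} (hm : m ≤ F) {k : ℕ}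
    (Y₁ Y₂ : Ω → ℝ) (hY₁ : MemLp Y₁ 2 P) (hY₂ : MemLp Y₂ 2 P)
    (Z : Ω → Fin k → ℝ) (hZm : Measurable[m] Z)
    (hZ2 : ∀ i, MemLp (fun ω => Z ω i) 2 P)
    (μN : Fin k → ℝ) (hμN : ∀ i, μN i = ∫ ω, Z ω i ∂P)
    (Sf : Matrix (Fin k) (Fin k) ℝ)
    (hSf : ∀ i j, Sf i j =
      ∫ ω, Z ω i * Z ω j ∂P - (∫ ω, Z ω i ∂P) * ∫ ω, Z ω j ∂P)
    (SN : Matrix (Fin k) (Fin k) ℝ) (hSN : IsUnit SN.det)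
    (S₁ S₂ : Fin k → ℝ) (μ₁ μ₂ : ℝ)
    (hc₁ : P[Y₁|m] =ᵐ[P] fun ω => μ₁ + S₁ ⬝ᵥ (SN⁻¹ *ᵥ fun j => Z ω j - μN j))
    (hc₂ : P[Y₂|m] =ᵐ[P] fun ω => μ₂ + S₂ ⬝ᵥ (SN⁻¹ *ᵥ fun j => Z ω j - μN j))
    (hint1 : Integrable (fun ω => (P[Y₁|m]) ω * (P[Y₂|m]) ω) P)
    (hint2 : Integrable (P[fun ω => Y₁ ω * Y₂ ω|m]) P) :
    ∫ ω, Y₁ ω * Y₂ ω ∂P - (∫ ω, Y₁ ω ∂P) * ∫ ω, Y₂ ω ∂P =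
      (∫ ω, ((P[fun ω => Y₁ ω * Y₂ ω|m]) ω - (P[Y₁|m]) ω * (P[Y₂|m]) ω) ∂P)
        + (S₁ ᵥ* SN⁻¹) ⬝ᵥ (Sf *ᵥ (S₂ ᵥ* SN⁻¹)) :=
  pogamp_covariance_decomposition_general hm Y₁ Y₂ hY₁ hY₂ Z hZ2 μN Sf hSf SN S₁ S₂ μ₁ μ₂ hc₁ hc₂
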